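/- Let P be a nonzero Nijenhuis operator on A_α that is homogeneous of degree c ≠ 0. Then P(x) = s·y for some s ∈ ℂ and P(y) = 0. -/

import Mathlib

open scoped TensorProduct

/-- A skew-symmetric bicharacter of an abelian group `G` over a field `k`. -/
structure Bicharacter (G : Type*) (k : Type*) [AddCommGroup G] [Field k] where
  ε : G → G → k
  ne_zero : ∀ a b : G, ε a b ≠ 0
  add_left : ∀ a b c : G, ε (a + b) c = ε a c * ε b c
  add_right : ∀ a b c : G, ε a (b + c) = ε a b * ε a c
  skew : ∀ a b : G, ε a b * ε b a = 1

/-- `(A, 𝒜, μ)` is a left-symmetric color algebra over `k` with respect to the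
skew-symmetric bicharacter `ε`: the grading `𝒜` is an internal direct sum
decomposition of `A`, the multiplication `μ` respects the grading, and the
left-symmetric color identity holds on homogeneous elements. -/
structure IsLSCA {G k A : Type*} [AddCommGroup G] [DecidableEq G] [Field k]
    [AddCommGroup A] [Module k A]
    (ε : Bicharacter G k) (𝒜 : G → Submodule k A) (μ : A →ₗ[k] A →ₗ[k] A) : Prop where
  internal : DirectSum.IsInternal 𝒜
  graded_mul : ∀ a b : G, ∀ x ∈ 𝒜 a, ∀ y ∈ 𝒜 b, μ x y ∈ 𝒜 (a + b)
  left_symm : ∀ a b c : G, ∀ x ∈ 𝒜 a, ∀ y ∈ 𝒜 b, ∀ z ∈ 𝒜 c,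
    μ (μ x y) z - μ x (μ y z) = ε.ε a b • (μ (μ y x) z - μ y (μ x z))

/-- `P` is a Nijenhuis operator on the left-symmetric color algebra `A`, homogeneous
of degree `c`:  `P(x)P(y) = ε(|P|+|x|,|P|) P(P(x)y) + P(x P(y)) − ε(|x|,|P|) P(P(xy))`
for all homogeneous `x, y`. -/
def IsNijenhuisOp {G k A : Type*} [AddCommGroup G] [Field k] [AddCommGroup A] [Module k A]
    (ε : Bicharacter G k) (𝒜 : G → Submodule k A) (μ : A →ₗ[k] A →ₗ[k] A)
    (c : G) (P : A →ₗ[k] A) : Prop :=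
  (∀ a : G, ∀ x ∈ 𝒜 a, P x ∈ 𝒜 (a + c)) ∧
  ∀ a b : G, ∀ x ∈ 𝒜 a, ∀ y ∈ 𝒜 b,
    μ (P x) (P y)
      = ε.ε (c + a) c • P (μ (P x) y) + P (μ x (P y)) - ε.ε a c • P (P (μ x y))

/-- `P` is a Rota-Baxter operator of weight `lam` on the left-symmetric color algebra
`A`, homogeneous of degree `c`:
`P(x)P(y) = ε(|P|+|x|,|P|) P(P(x)y) + P(x P(y)) + lam·P(xy)` for all homogeneous
`x, y`. -/
def IsRotaBaxterOp {G k A : Type*} [AddCommGroup G] [Field k] [AddCommGroup A] [Module k A]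
    (ε : Bicharacter G k) (𝒜 : G → Submodule k A) (μ : A →ₗ[k] A →ₗ[k] A)
    (c : G) (lam : k) (P : A →ₗ[k] A) : Prop :=
  (∀ a : G, ∀ x ∈ 𝒜 a, P x ∈ 𝒜 (a + c)) ∧
  ∀ a b : G, ∀ x ∈ 𝒜 a, ∀ y ∈ 𝒜 b,
    μ (P x) (P y)
      = ε.ε (c + a) c • P (μ (P x) y) + P (μ x (P y)) + lam • P (μ x y)

/-! Since `c ≠ 0`, the homogeneous map `P` sends `x` into `𝒜 (a + c)` and `y` into `𝒜 (b + c)`,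
and these vanish unless `a + c = b`, resp. `b + c = a`. In the latter case `P y = t • x`, and the
Nijenhuis identity at `(y, y)` collapses to `t² α • y = 0`, since every product of `y` with `x`
or `y` is zero; hence `P y = 0`. -/

namespace IsNijenhuisOp

variable {G k A : Type*} [AddCommGroup G] [Field k] [AddCommGroup A] [Module k A]
  {ε : Bicharacter G k} {𝒜 : G → Submodule k A} {μ : A →ₗ[k] A →ₗ[k] A} {c g : G}
  {P : A →ₗ[k] A}

theorem apply_mem (hP : IsNijenhuisOp ε 𝒜 μ c P) {x : A} (hx : x ∈ 𝒜 g) : P x ∈ 𝒜 (g + c) :=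
  hP.1 g x hx

theorem apply_eq_zero_of_eq_bot (hP : IsNijenhuisOp ε 𝒜 μ c P) {x : A} (hx : x ∈ 𝒜 g)
    (hbot : 𝒜 (g + c) = ⊥) : P x = 0 := by
  simpa [hbot] using hP.apply_mem hx

theorem mul_apply_self_of_mul_self_eq_zero (hP : IsNijenhuisOp ε 𝒜 μ c P) {y : A}
    (hy : y ∈ 𝒜 g) (hyy : μ y y = 0) :
    μ (P y) (P y) = ε.ε (c + g) c • P (μ (P y) y) + P (μ y (P y)) := by
  simpa [hyy] using hP.2 g g y hy y hy

theorem apply_eq_zero_of_apply_eq_smul (hP : IsNijenhuisOp ε 𝒜 μ c P) {x y : A} {α t : k}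
    (hα : α ≠ 0) (hy : y ∈ 𝒜 g) (hxx : μ x x = α • y) (hxy : μ x y = 0) (hyx : μ y x = 0)
    (hyy : μ y y = 0) (hPy : P y = t • x) : P y = 0 := by
  have key : t • t • α • y = 0 := by
    simpa [hPy, hxx, hxy, hyx] using hP.mul_apply_self_of_mul_self_eq_zero hy hyy
  obtain ht | hy0 : t = 0 ∨ y = 0 := by simpa [hα] using key
  · simp [hPy, ht]
  · simp [hy0]

end IsNijenhuisOp

theorem nijenhuis_nonzero_degree_on_Aalpha_general {G : Type*} [AddCommGroup G]
    (a b : G)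
    (ε : Bicharacter G ℂ)
    {A : Type*} [AddCommGroup A] [Module ℂ A]
    (x y : A)
    (𝒜 : G → Submodule ℂ A)
    (h𝒜a : 𝒜 a = Submodule.span ℂ {x}) (h𝒜b : 𝒜 b = Submodule.span ℂ {y})
    (h𝒜 : ∀ g : G, g ≠ a → g ≠ b → 𝒜 g = ⊥)
    (α : ℂ) (hα : α ≠ 0)
    (μ : A →ₗ[ℂ] A →ₗ[ℂ] A)
    (hxx : μ x x = α • y) (hxy : μ x y = 0) (hyx : μ y x = 0) (hyy : μ y y = 0)
    (c : G) (hc : c ≠ 0) (P : A →ₗ[ℂ] A)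
    (hP : IsNijenhuisOp ε 𝒜 μ c P) :
    (∃ s : ℂ, P x = s • y) ∧ P y = 0 := by
  have hx : x ∈ 𝒜 a := h𝒜a ▸ Submodule.mem_span_singleton_self x
  have hy : y ∈ 𝒜 b := h𝒜b ▸ Submodule.mem_span_singleton_self y
  constructor
  · by_cases hac : a + c = b
    · have hPx := hP.apply_mem hx
      rw [hac, h𝒜b, Submodule.mem_span_singleton] at hPx
      obtain ⟨s, hs⟩ := hPx
      exact ⟨s, hs.symm⟩
    · refine ⟨0, ?_⟩
      rw [zero_smul, hP.apply_eq_zero_of_eq_bot hx (h𝒜 _ (by simpa using hc) hac)]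
  · by_cases hbc : b + c = a
    · have hPy := hP.apply_mem hy
      rw [hbc, h𝒜a, Submodule.mem_span_singleton] at hPy
      obtain ⟨t, ht⟩ := hPy
      exact hP.apply_eq_zero_of_apply_eq_smul hα hy hxx hxy hyx hyy ht.symm
    · exact hP.apply_eq_zero_of_eq_bot hy (h𝒜 _ hbc (by simpa using hc))

/-- If `P` is a nonzero Nijenhuis operator on the 2-dimensional
proper left-symmetric color algebra `A_α` over `ℂ`, homogeneous of degree `c ≠ 0`,
then `P(x) = s·y` for some `s ∈ ℂ` and `P(y) = 0`. -/
theorem nijenhuis_nonzero_degree_on_Aalpha {G : Type*} [AddCommGroup G] [DecidableEq G]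
    (a b : G) (hab : a + a = b) (hne : a ≠ b) (ha : a ≠ 0) (hb : b ≠ 0)
    (ε : Bicharacter G ℂ)
    {A : Type*} [AddCommGroup A] [Module ℂ A]
    (x y : A) (hind : LinearIndependent ℂ ![x, y])
    (hspan : Submodule.span ℂ {x, y} = ⊤)
    (𝒜 : G → Submodule ℂ A)
    (h𝒜a : 𝒜 a = Submodule.span ℂ {x}) (h𝒜b : 𝒜 b = Submodule.span ℂ {y})
    (h𝒜 : ∀ g : G, g ≠ a → g ≠ b → 𝒜 g = ⊥)
    (α : ℂ) (hα : α ≠ 0)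
    (μ : A →ₗ[ℂ] A →ₗ[ℂ] A)
    (hxx : μ x x = α • y) (hxy : μ x y = 0) (hyx : μ y x = 0) (hyy : μ y y = 0)
    (c : G) (hc : c ≠ 0) (P : A →ₗ[ℂ] A) (hPne : P ≠ 0)
    (hP : IsNijenhuisOp ε 𝒜 μ c P) :
    (∃ s : ℂ, P x = s • y) ∧ P y = 0 :=
  nijenhuis_nonzero_degree_on_Aalpha_general a b ε x y 𝒜 h𝒜a h𝒜b h𝒜 α hα μ hxx hxy hyx hyy c hc P hP
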